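/- Let w : ℝ → (0,∞) be continuous with 1/w not Lebesgue-integrable on (−∞,0) and not Lebesgue-integrable on (0,∞), let p_w(ξ) = ∫₀^ξ w(ζ)⁻¹ dζ, and let θ > 0. Let x ∈ L²_w(ℝ) be such that w·x is locally absolutely continuous with (w·x)′ ∈ L²_w(ℝ), and put y := θ·x − (w·x)′ ∈ L²_w(ℝ). Then for every ξ ∈ ℝ the integral ∫_ξ^∞ e^{−θ(p_w(s)−p_w(ξ))} y(s) ds converges absolutely, and for almost every ξ ∈ ℝ one has (1/w(ξ)) ∫_ξ^∞ e^{−θ(p_w(s)−p_w(ξ))} y(s) ds = x(ξ). (This is the resolvent identity R(θ)(θ − A_w)x = x for the generator A_w x = (w·x)′.) -/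

import Mathlib

open MeasureTheory Filter Set Topology

/-- `p_w(ξ) = ∫₀^ξ w(ζ)⁻¹ dζ`. -/
noncomputable def pW (w : ℝ → ℝ) (ξ : ℝ) : ℝ := ∫ ζ in (0:ℝ)..ξ, (w ζ)⁻¹

/-!
With `u = w·x` and `E(s) = exp(-θ (p_w s - p_w ξ))` we have `E' = -θ E / w`, so
`(E u)' = -θ E x + E (w x)' = -E y` almost everywhere. Since `E u` is absolutely continuous on
compact intervals, `∫_ξ^T E y = u ξ - E(T) u(T)`. The non-integrability of `1/w` on `(0, ∞)`
means `p_w → ∞`, which makes `E y` integrable on `(ξ, ∞)` by Cauchy–Schwarz against the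
weight; hence `E(T) u(T)` has a limit `L`. Finally `‖E u‖² · e^{2θ(p_w - p_w ξ)} / w = w |x|²` is
integrable while `e^{2θ(p_w - p_w ξ)} / w` is not, which forces `L = 0`.
-/

theorem mul_le_half_inv_mul_sq_add_mul_sq {w : ℝ} (hw : 0 < w) (a b : ℝ) :
    a * b ≤ (w⁻¹ * a ^ 2 + w * b ^ 2) / 2 := by
  have hsq : 0 ≤ w⁻¹ * (a - w * b) ^ 2 := by positivity
  have hexpand : w⁻¹ * (a - w * b) ^ 2 = w⁻¹ * a ^ 2 + w * b ^ 2 - 2 * (a * b) := by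
    field_simp; ring
  linarith

section Weighted

variable {α E : Type*} [MeasurableSpace α] {μ : Measure α} [NormedAddCommGroup E]
  [NormedSpace ℝ E] {w : α → ℝ}

theorem integrable_smul_of_weighted_sq (hw : ∀ a, 0 < w a) {g : α → ℝ} {f : α → E}
    (hgm : AEStronglyMeasurable g μ) (hfm : AEStronglyMeasurable f μ)
    (hg : Integrable (fun a => (w a)⁻¹ * g a ^ 2) μ)
    (hf : Integrable (fun a => w a * ‖f a‖ ^ 2) μ) :
    Integrable (fun a => g a • f a) μ := by
  refine ((hg.add hf).div_const 2).mono' (hgm.smul hfm) (Eventually.of_forall fun a => ?_)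
  simp only [Pi.add_apply, norm_smul, Real.norm_eq_abs, ← sq_abs (g a)]
  exact mul_le_half_inv_mul_sq_add_mul_sq (hw a) _ _

theorem locallyIntegrable_of_integrable_weight_mul_sq [TopologicalSpace α]
    [SecondCountableTopology α] [OpensMeasurableSpace α] [IsLocallyFiniteMeasure μ]
    (hw : Continuous w) (hw_pos : ∀ a, 0 < w a) {f : α → E}
    (hfm : AEStronglyMeasurable f μ) (hf : Integrable (fun a => w a * ‖f a‖ ^ 2) μ) :
    LocallyIntegrable f μ := by
  intro a
  obtain ⟨U, hU, hwU⟩ := (hw.inv₀ fun a => (hw_pos a).ne').locallyIntegrable (μ := μ) a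
  have hfU := integrable_smul_of_weighted_sq (μ := μ.restrict U) hw_pos (g := fun _ => 1)
    aestronglyMeasurable_const hfm.restrict (by simp only [one_pow, mul_one]; exact hwU)
    hf.integrableOn
  simp only [one_smul] at hfU
  exact ⟨U, hU, hfU⟩

end Weighted

theorem Isometry.comp_absolutelyContinuousOnInterval {X Y : Type*} [PseudoMetricSpace X]
    [PseudoMetricSpace Y] {φ : X → Y} (hφ : Isometry φ) {f : ℝ → X} {a b : ℝ}
    (hf : AbsolutelyContinuousOnInterval f a b) :
    AbsolutelyContinuousOnInterval (φ ∘ f) a b := by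
  simpa only [AbsolutelyContinuousOnInterval, Function.comp_apply, hφ.dist_eq] using hf

theorem LocallyIntegrable.absolutelyContinuousOnInterval_intervalIntegral {f : ℝ → ℂ}
    (hf : LocallyIntegrable f volume) (a b : ℝ) :
    AbsolutelyContinuousOnInterval (fun x ↦ ∫ v in a..x, f v) a b := by
  have hre : LocallyIntegrable (fun x => (f x).re) volume :=
    hf.mono hf.aestronglyMeasurable.re (Eventually.of_forall fun x => by
      simpa using Complex.abs_re_le_norm (f x))
  have him : LocallyIntegrable (fun x => (f x).im) volume :=
    hf.mono hf.aestronglyMeasurable.im (Eventually.of_forall fun x => by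
      simpa using Complex.abs_im_le_norm (f x))
  have hsplit : (fun x ↦ ∫ v in a..x, f v) = fun x ↦
      ((∫ v in a..x, (f v).re : ℝ) : ℂ) + Complex.I * ((∫ v in a..x, (f v).im : ℝ) : ℂ) := by
    funext x
    have hfx := (hf.integrableOn_isCompact (isCompact_uIcc (a := a) (b := x))).intervalIntegrable
    have hre_x := intervalIntegral.intervalIntegral_re hfx
    have him_x := intervalIntegral.intervalIntegral_im hfx
    simp only [RCLike.re_to_complex, RCLike.im_to_complex] at hre_x him_x
    rw [hre_x, him_x, mul_comm]
    exact (Complex.re_add_im _).symm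
  have hre_ac := (hre.integrableOn_isCompact isCompact_uIcc).intervalIntegrable
    |>.absolutelyContinuousOnInterval_intervalIntegral (left_mem_uIcc (a := a) (b := b))
  have him_ac := (him.integrableOn_isCompact isCompact_uIcc).intervalIntegrable
    |>.absolutelyContinuousOnInterval_intervalIntegral (left_mem_uIcc (a := a) (b := b))
  rw [hsplit]
  exact (Complex.isometry_ofReal.comp_absolutelyContinuousOnInterval hre_ac).add
    ((Complex.isometry_ofReal.comp_absolutelyContinuousOnInterval him_ac).const_smul Complex.I)

theorem eq_zero_of_tendsto_of_integrableOn_mul {μ : Measure ℝ} {v g : ℝ → ℝ} {L a : ℝ}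
    (hv : Tendsto v atTop (𝓝 L)) (hgm : AEStronglyMeasurable g μ)
    (hg : ∀ b, ¬ IntegrableOn g (Ioi b) μ)
    (hvg : IntegrableOn (fun s => v s * g s) (Ioi a) μ) :
    L = 0 := by
  by_contra hL
  have hL' : 0 < |L| := abs_pos.2 hL
  obtain ⟨b, hb⟩ :=
    eventually_atTop.1 (hv.abs.eventually (eventually_gt_nhds (half_lt_self hL')))
  have hvg' := (hvg.mono_set (Ioi_subset_Ioi (le_max_left a b))).norm.const_mul (2 / |L|)
  refine hg (max a b) (hvg'.mono' hgm.restrict ?_)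
  refine (ae_restrict_iff' measurableSet_Ioi).2 (Eventually.of_forall fun s hs => ?_)
  have hvs := hb s (le_of_max_le_right hs.le)
  rw [Real.norm_eq_abs, Real.norm_eq_abs, abs_mul, div_mul_eq_mul_div, le_div_iff₀ hL']
  nlinarith [abs_nonneg (g s)]

theorem sq_norm_exp_smul_mul_inv_mul_exp {w : ℝ} (hw : 0 < w) (c t : ℝ) (z : ℂ) :
    ‖Real.exp (-c * t) • ((w : ℂ) * z)‖ ^ 2 * (w⁻¹ * Real.exp (2 * c * t)) = w * ‖z‖ ^ 2 := by
  have hexp : Real.exp (-c * t) ^ 2 * Real.exp (2 * c * t) = 1 := by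
    rw [← Real.exp_nat_mul, ← Real.exp_add]
    ring_nf
    exact Real.exp_zero
  have hw1 : w * w⁻¹ = 1 := mul_inv_cancel₀ hw.ne'
  rw [norm_smul, norm_mul, Complex.norm_real, Real.norm_of_nonneg (Real.exp_pos _).le,
    Real.norm_of_nonneg hw.le]
  linear_combination (w * ‖z‖ ^ 2) * hexp
    + (w * ‖z‖ ^ 2 * (Real.exp (-c * t) ^ 2 * Real.exp (2 * c * t))) * hw1

section pW

variable {w : ℝ → ℝ}

theorem hasDerivAt_pW (hw : Continuous w) (hw_pos : ∀ s, 0 < w s) (s : ℝ) :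
    HasDerivAt (pW w) (w s)⁻¹ s := by
  have hinv : Continuous fun s => (w s)⁻¹ := hw.inv₀ fun s => (hw_pos s).ne'
  exact intervalIntegral.integral_hasDerivAt_right (hinv.intervalIntegrable 0 s)
    hinv.stronglyMeasurable.stronglyMeasurableAtFilter hinv.continuousAt

theorem tendsto_pW_atTop (hw : Continuous w) (hw_pos : ∀ s, 0 < w s)
    (hni : ¬ IntegrableOn (fun s => (w s)⁻¹) (Ioi 0)) : Tendsto (pW w) atTop atTop := by
  have hmono : Monotone (pW w) := monotone_of_deriv_nonneg
    (fun s => (hasDerivAt_pW hw hw_pos s).differentiableAt)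
    (fun s => (hasDerivAt_pW hw hw_pos s).deriv ▸ (inv_pos.2 (hw_pos s)).le)
  refine tendsto_atTop_atTop_of_monotone' hmono fun hbdd => hni ?_
  exact integrableOn_Ioi_deriv_of_nonneg' (fun s _ => hasDerivAt_pW hw hw_pos s)
    (fun s _ => (inv_pos.2 (hw_pos s)).le) (tendsto_atTop_ciSup hmono hbdd)

theorem hasDerivAt_exp_mul_pW_sub (hw : Continuous w) (hw_pos : ∀ s, 0 < w s) (c a s : ℝ) :
    HasDerivAt (fun t => Real.exp (c * (pW w t - a)))
      (c * (w s)⁻¹ * Real.exp (c * (pW w s - a))) s := by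
  convert (((hasDerivAt_pW hw hw_pos s).sub_const a).const_mul c).exp using 1
  ring

theorem continuous_exp_mul_pW_sub (hw : Continuous w) (hw_pos : ∀ s, 0 < w s) (c a : ℝ) :
    Continuous fun t => Real.exp (c * (pW w t - a)) :=
  continuous_iff_continuousAt.2 fun s => (hasDerivAt_exp_mul_pW_sub hw hw_pos c a s).continuousAt

theorem hasDerivAt_exp_mul_pW_sub_div (hw : Continuous w) (hw_pos : ∀ s, 0 < w s) {c : ℝ}
    (hc : c ≠ 0) (a s : ℝ) :
    HasDerivAt (fun t => Real.exp (c * (pW w t - a)) / c)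
      ((w s)⁻¹ * Real.exp (c * (pW w s - a))) s :=
  ((hasDerivAt_exp_mul_pW_sub hw hw_pos c a s).div_const c).congr_deriv (by field_simp)

theorem integrableOn_Ioi_inv_mul_exp_pW (hw : Continuous w) (hw_pos : ∀ s, 0 < w s)
    (hp : Tendsto (pW w) atTop atTop) {c : ℝ} (hc : c < 0) (a b : ℝ) :
    IntegrableOn (fun s => (w s)⁻¹ * Real.exp (c * (pW w s - a))) (Ioi b) := by
  have hlim : Tendsto (fun t => Real.exp (c * (pW w t - a)) / c) atTop (𝓝 (0 / c)) :=
    (Real.tendsto_exp_atBot.comp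
      ((tendsto_atTop_add_const_right atTop (-a) hp).const_mul_atTop_of_neg hc)).div_const c
  exact integrableOn_Ioi_deriv_of_nonneg'
    (fun s _ => hasDerivAt_exp_mul_pW_sub_div hw hw_pos hc.ne a s)
    (fun s _ => by have := hw_pos s; positivity) hlim

theorem not_integrableOn_Ioi_inv_mul_exp_pW (hw : Continuous w) (hw_pos : ∀ s, 0 < w s)
    (hp : Tendsto (pW w) atTop atTop) {c : ℝ} (hc : 0 < c) (a b : ℝ) :
    ¬ IntegrableOn (fun s => (w s)⁻¹ * Real.exp (c * (pW w s - a))) (Ioi b) := fun hint =>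
  not_tendsto_nhds_of_tendsto_atTop
    ((Real.tendsto_exp_atTop.comp
      ((tendsto_atTop_add_const_right atTop (-a) hp).const_mul_atTop hc)).atTop_div_const hc) _
    (tendsto_limUnder_of_hasDerivAt_of_integrableOn_Ioi
      (fun s _ => hasDerivAt_exp_mul_pW_sub_div hw hw_pos hc.ne' a s) hint)

theorem integrableOn_Ioi_exp_pW_smul {E : Type*} [NormedAddCommGroup E] [NormedSpace ℝ E]
    (hw : Continuous w) (hw_pos : ∀ s, 0 < w s)
    (hp : Tendsto (pW w) atTop atTop) {θ : ℝ} (hθ : 0 < θ) {f : ℝ → E}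
    (hfm : AEStronglyMeasurable f volume) (hf : Integrable fun s => w s * ‖f s‖ ^ 2) (a b : ℝ) :
    IntegrableOn (fun s => Real.exp (-θ * (pW w s - a)) • f s) (Ioi b) := by
  refine integrable_smul_of_weighted_sq hw_pos
    (continuous_exp_mul_pW_sub hw hw_pos (-θ) a).aestronglyMeasurable.restrict
    hfm.restrict ?_ hf.integrableOn
  refine (integrableOn_Ioi_inv_mul_exp_pW hw hw_pos hp (c := -(2 * θ)) (by linarith) a b).congr_fun
    (fun s _ => ?_) measurableSet_Ioi
  rw [sq, ← Real.exp_add]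
  ring_nf

theorem exp_pW_smul_add_integral_eq (hw : Continuous w) (hw_pos : ∀ s, 0 < w s) (θ : ℝ)
    {x xd : ℝ → ℂ} (hx : LocallyIntegrable x volume) (hxd : LocallyIntegrable xd volume)
    (hFTC : ∀ a b : ℝ, (w b : ℂ) * x b - (w a : ℂ) * x a = ∫ ζ in a..b, xd ζ) (ξ T : ℝ) :
    Real.exp (-θ * (pW w T - pW w ξ)) • ((w T : ℂ) * x T)
      + ∫ s in ξ..T, Real.exp (-θ * (pW w s - pW w ξ)) • ((θ : ℂ) * x s - xd s)
      = (w ξ : ℂ) * x ξ := by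
  set E : ℝ → ℝ := fun s => Real.exp (-θ * (pW w s - pW w ξ)) with hE_def
  have hE : ∀ s, HasDerivAt E (-θ * (w s)⁻¹ * E s) s :=
    hasDerivAt_exp_mul_pW_sub hw hw_pos (-θ) (pW w ξ)
  have hE_cont : Continuous E := continuous_exp_mul_pW_sub hw hw_pos (-θ) (pW w ξ)
  have hEy : LocallyIntegrable (fun s => E s • ((θ : ℂ) * x s - xd s)) volume :=
    locallyIntegrable_iff.2 fun K hK => IntegrableOn.continuousOn_smul
      (((hx.integrableOn_isCompact hK).const_mul (θ : ℂ)).sub (hxd.integrableOn_isCompact hK))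
      hE_cont.continuousOn hK
  have hu : ∀ s, (w s : ℂ) * x s = (w ξ : ℂ) * x ξ + ∫ t in ξ..s, xd t := fun s => by
    rw [← hFTC ξ s]; ring
  set G : ℝ → ℂ := fun s => E s • ((w ξ : ℂ) * x ξ + ∫ t in ξ..s, xd t)
    + ∫ t in ξ..s, E t • ((θ : ℂ) * x t - xd t) with hG_def
  have hE_ac : AbsolutelyContinuousOnInterval E ξ T := by
    refine ContDiffOn.absolutelyContinuousOnInterval (ContDiff.contDiffOn ?_)
    refine contDiff_one_iff_deriv.2 ⟨fun s => (hE s).differentiableAt, ?_⟩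
    rw [funext fun s => (hE s).deriv]
    exact (continuous_const.mul (hw.inv₀ fun s => (hw_pos s).ne')).mul hE_cont
  have hG_ac : AbsolutelyContinuousOnInterval G ξ T :=
    (hE_ac.smul ((LipschitzWith.const _).lipschitzOnWith.absolutelyContinuousOnInterval.add
      (LocallyIntegrable.absolutelyContinuousOnInterval_intervalIntegral hxd ξ T))).add
      (LocallyIntegrable.absolutelyContinuousOnInterval_intervalIntegral hEy ξ T)
  have hG_deriv : ∀ᵐ s, s ∈ uIcc ξ T → HasDerivAt G 0 s := by
    filter_upwards [LocallyIntegrable.ae_hasDerivAt_integral hxd,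
      LocallyIntegrable.ae_hasDerivAt_integral hEy] with s hxd_s hEy_s _
    refine (((hE s).smul ((hxd_s ξ).const_add ((w ξ : ℂ) * x ξ))).add (hEy_s ξ)).congr_deriv
      ?_
    rw [← hu s]
    have hw0 : (w s : ℂ) ≠ 0 := Complex.ofReal_ne_zero.2 (hw_pos s).ne'
    simp only [Complex.real_smul]
    push_cast
    field_simp
    ring
  obtain ⟨C, hC⟩ := hG_ac.const_of_ae_hasDerivAt_zero hG_deriv
  have hGT := hC T right_mem_uIcc
  rw [← hC ξ left_mem_uIcc] at hGT
  simp only [hG_def, ← hu T] at hGT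
  simpa [hE_def] using hGT

theorem eq_zero_of_tendsto_exp_pW_smul (hw : Continuous w) (hw_pos : ∀ s, 0 < w s)
    (hp : Tendsto (pW w) atTop atTop) {θ : ℝ} (hθ : 0 < θ) {x : ℝ → ℂ}
    (hx : Integrable fun s => w s * ‖x s‖ ^ 2) {a : ℝ} {L : ℂ}
    (hlim : Tendsto (fun T => Real.exp (-θ * (pW w T - a)) • ((w T : ℂ) * x T)) atTop (𝓝 L)) :
    L = 0 := by
  have hgm : AEStronglyMeasurable (fun s => (w s)⁻¹ * Real.exp (2 * θ * (pW w s - a))) volume :=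
    ((hw.inv₀ fun s => (hw_pos s).ne').mul
      (continuous_exp_mul_pW_sub hw hw_pos (2 * θ) a)).aestronglyMeasurable
  have hL := eq_zero_of_tendsto_of_integrableOn_mul (a := 0) (hlim.norm.pow 2) hgm
    (not_integrableOn_Ioi_inv_mul_exp_pW hw hw_pos hp (by linarith) a)
    (hx.integrableOn.congr_fun
      (fun s _ => (sq_norm_exp_smul_mul_inv_mul_exp (hw_pos s) θ _ (x s)).symm) measurableSet_Ioi)
  simpa using hL

end pW

theorem stmt_14_general (w : ℝ → ℝ) (hw_cont : Continuous w) (hw_pos : ∀ ξ, 0 < w ξ)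
    (hni_pos : ¬ IntegrableOn (fun ζ => (w ζ)⁻¹) (Set.Ioi 0))
    (θ : ℝ) (hθ : 0 < θ)
    (x xd : ℝ → ℂ)
    (hx_meas : AEStronglyMeasurable x volume)
    (hx : Integrable fun ξ => w ξ * ‖x ξ‖ ^ 2)
    (hxd_meas : AEStronglyMeasurable xd volume)
    (hxd : Integrable fun ξ => w ξ * ‖xd ξ‖ ^ 2)
    (hFTC : ∀ a b : ℝ, (w b : ℂ) * x b - (w a : ℂ) * x a = ∫ ζ in a..b, xd ζ) :
    (∀ ξ : ℝ, IntegrableOn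
        (fun s => Real.exp (-θ * (pW w s - pW w ξ)) • ((θ : ℂ) * x s - xd s))
        (Set.Ici ξ)) ∧
    ∀ᵐ ξ, ((w ξ : ℂ))⁻¹ *
        (∫ s in Set.Ici ξ,
          Real.exp (-θ * (pW w s - pW w ξ)) • ((θ : ℂ) * x s - xd s)) = x ξ := by
  have hp := tendsto_pW_atTop hw_cont hw_pos hni_pos
  have hint : ∀ ξ, IntegrableOn
      (fun s => Real.exp (-θ * (pW w s - pW w ξ)) • ((θ : ℂ) * x s - xd s)) (Ioi ξ) := by
    intro ξ
    have hEx := integrableOn_Ioi_exp_pW_smul hw_cont hw_pos hp hθ hx_meas hx (pW w ξ) ξ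
    have hExd := integrableOn_Ioi_exp_pW_smul hw_cont hw_pos hp hθ hxd_meas hxd (pW w ξ) ξ
    refine IntegrableOn.congr_fun ((hEx.const_mul (θ : ℂ)).sub hExd) (fun s _ => ?_)
      measurableSet_Ioi
    simp only [Pi.sub_apply, smul_sub, mul_smul_comm]
  refine ⟨fun ξ => (integrableOn_Ici_iff_integrableOn_Ioi).2 (hint ξ),
    Eventually.of_forall fun ξ => ?_⟩
  have hparts := exp_pW_smul_add_integral_eq hw_cont hw_pos θ
    (locallyIntegrable_of_integrable_weight_mul_sq hw_cont hw_pos hx_meas hx)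
    (locallyIntegrable_of_integrable_weight_mul_sq hw_cont hw_pos hxd_meas hxd) hFTC ξ
  have hlim := ((intervalIntegral_tendsto_integral_Ioi ξ (hint ξ) tendsto_id).const_sub
    ((w ξ : ℂ) * x ξ)).congr fun T => (eq_sub_of_add_eq (hparts T)).symm
  rw [integral_Ici_eq_integral_Ioi,
    ← sub_eq_zero.1 (eq_zero_of_tendsto_exp_pW_smul hw_cont hw_pos hp hθ hx hlim),
    inv_mul_cancel_left₀ (Complex.ofReal_ne_zero.2 (hw_pos ξ).ne')]

/-- Resolvent identity `R(θ)(θ − A_w)x = x` for `A_w x = (w·x)'`.  Here `xd`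
denotes the a.e. derivative `(w·x)'` (encoded via the fundamental theorem of
calculus), and `y = θ·x − (w·x)'`. -/
theorem stmt_14 (w : ℝ → ℝ) (hw_cont : Continuous w) (hw_pos : ∀ ξ, 0 < w ξ)
    (hni_neg : ¬ IntegrableOn (fun ζ => (w ζ)⁻¹) (Set.Iio 0))
    (hni_pos : ¬ IntegrableOn (fun ζ => (w ζ)⁻¹) (Set.Ioi 0))
    (θ : ℝ) (hθ : 0 < θ)
    (x xd : ℝ → ℂ)
    (hx_meas : AEStronglyMeasurable x volume)
    (hx : Integrable fun ξ => w ξ * ‖x ξ‖ ^ 2)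
    (hxd_meas : AEStronglyMeasurable xd volume)
    (hxd : Integrable fun ξ => w ξ * ‖xd ξ‖ ^ 2)
    (hFTC : ∀ a b : ℝ, (w b : ℂ) * x b - (w a : ℂ) * x a = ∫ ζ in a..b, xd ζ) :
    (∀ ξ : ℝ, IntegrableOn
        (fun s => Real.exp (-θ * (pW w s - pW w ξ)) • ((θ : ℂ) * x s - xd s))
        (Set.Ici ξ)) ∧
    ∀ᵐ ξ, ((w ξ : ℂ))⁻¹ *
        (∫ s in Set.Ici ξ,
          Real.exp (-θ * (pW w s - pW w ξ)) • ((θ : ℂ) * x s - xd s)) = x ξ :=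
  stmt_14_general w hw_cont hw_pos hni_pos θ hθ x xd hx_meas hx hxd_meas hxd hFTC
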